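/- arXiv:1603.01582 — 6 statements merged into one kernel-verified Lean document; each statement's English description precedes it below -/
import Mathlib

section
/- Let V and W be k-dimensional real normed spaces with unit bases η_V = {v_1,…,v_k} and η_W = {w_1,…,w_k} such that min{dist(v_i, span{v_j : j ≠ i}), dist(w_i, span{w_j : j ≠ i})} ≥ α for all i, where α > 0. Then for every linear map T : V → W, |det_{η_V,η_W}(T)| ≤ k^{k/2} ‖T‖^k α^{-k}, where ‖T‖ is the operator norm. -/
/-!
Every entry `M i j` of the matrix of `T` is the `i`-th coordinate of `T v_j`. If `w_i` keeps
distance `α` from the span of the other `w_j`, the `i`-th coordinate functional of `η_W` has norm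
at most `α⁻¹`, so `|M i j| ≤ ‖T‖ ‖v_j‖ / α = ‖T‖ / α`. Hadamard's inequality bounds the
determinant by the product of the Euclidean column norms, each at most `√k ‖T‖ / α`.
-/

open scoped Matrix

theorem Matrix.abs_det_le_prod_norm_col {k : ℕ} (A : Matrix (Fin k) (Fin k) ℝ) :
    |A.det| ≤ ∏ j, ‖(WithLp.toLp 2 (Aᵀ j) : EuclideanSpace ℝ (Fin k))‖ := by
  have : Fact (Module.finrank ℝ (EuclideanSpace ℝ (Fin k)) = k) := ⟨finrank_euclideanSpace_fin⟩
  let b := EuclideanSpace.basisFun (Fin k) ℝ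
  have hA : A = b.toBasis.toMatrix fun j => WithLp.toLp 2 (Aᵀ j) := by
    ext i j
    simp [b, Module.Basis.toMatrix_apply]
  rw [hA, ← Module.Basis.det_apply, ← b.toBasis.orientation.volumeForm_robust' b]
  exact b.toBasis.orientation.abs_volumeForm_apply_le _

theorem EuclideanSpace.norm_le_sqrt_card_mul {k : ℕ} (v : EuclideanSpace ℝ (Fin k)) {x : ℝ}
    (hx : 0 ≤ x) (h : ∀ i, |v i| ≤ x) : ‖v‖ ≤ √k * x := by
  rw [← Real.sqrt_sq hx, ← Real.sqrt_mul (Nat.cast_nonneg k), EuclideanSpace.norm_eq]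
  refine Real.sqrt_le_sqrt ?_
  calc ∑ i, ‖v i‖ ^ 2 ≤ ∑ _i : Fin k, x ^ 2 := by
        gcongr with i
        exact h i
    _ = k * x ^ 2 := by simp

theorem Matrix.abs_det_le_of_forall_abs_le {k : ℕ} (A : Matrix (Fin k) (Fin k) ℝ) {x : ℝ}
    (hx : 0 ≤ x) (h : ∀ i j, |A i j| ≤ x) : |A.det| ≤ (k : ℝ) ^ ((k : ℝ) / 2) * x ^ k := by
  have hsqrt : √(k : ℝ) ^ k = (k : ℝ) ^ ((k : ℝ) / 2) := by
    rw [Real.sqrt_eq_rpow, ← Real.rpow_natCast, ← Real.rpow_mul (Nat.cast_nonneg k),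
      one_div_mul_eq_div]
  calc |A.det| ≤ ∏ j, ‖(WithLp.toLp 2 (Aᵀ j) : EuclideanSpace ℝ (Fin k))‖ :=
        A.abs_det_le_prod_norm_col
    _ ≤ ∏ _j : Fin k, √k * x := by
        gcongr with j
        exact EuclideanSpace.norm_le_sqrt_card_mul _ hx fun i => h i j
    _ = (k : ℝ) ^ ((k : ℝ) / 2) * x ^ k := by
        rw [Finset.prod_const, Finset.card_fin, mul_pow, hsqrt]

theorem Submodule.norm_smul_mul_infDist_le {𝕜 E : Type*} [NormedField 𝕜]
    [SeminormedAddCommGroup E] [NormedSpace 𝕜 E] (S : Submodule 𝕜 E) (x : E) (c : 𝕜)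
    {s : E} (hs : s ∈ S) : ‖c‖ * Metric.infDist x S ≤ ‖c • x + s‖ := by
  rcases eq_or_ne c 0 with rfl | hc
  · simp
  calc ‖c‖ * Metric.infDist x S ≤ ‖c‖ * dist x (-c⁻¹ • s) := by
        gcongr
        exact Metric.infDist_le_dist_of_mem (S.smul_mem _ hs)
    _ = ‖c • x + s‖ := by
        rw [dist_eq_norm, ← norm_smul, smul_sub, smul_smul, mul_neg, mul_inv_cancel₀ hc,
          neg_one_smul, sub_neg_eq_add]

theorem Module.Basis.mul_abs_repr_le_norm {ι E : Type*} [SeminormedAddCommGroup E]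
    [NormedSpace ℝ E] (b : Module.Basis ι ℝ E) {α : ℝ} {i : ι}
    (hα : α ≤ Metric.infDist (b i) (Submodule.span ℝ (b '' {j | j ≠ i}) : Set E)) (w : E) :
    α * |b.repr w i| ≤ ‖w‖ := by
  set S := Submodule.span ℝ (b '' {j | j ≠ i})
  set c := b.repr w i
  have hrest : w - c • b i ∈ S := by
    rw [b.mem_span_image]
    rintro j hj rfl
    simp [c] at hj
  calc α * |c| ≤ |c| * Metric.infDist (b i) S := by
        rw [mul_comm]
        gcongr
    _ ≤ ‖c • b i + (w - c • b i)‖ := S.norm_smul_mul_infDist_le (b i) c hrest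
    _ = ‖w‖ := by rw [add_sub_cancel]

theorem ContinuousLinearMap.mul_abs_toMatrix_le_opNorm {ι κ V W : Type*}
    [Fintype ι] [DecidableEq ι] [Fintype κ]
    [SeminormedAddCommGroup V] [NormedSpace ℝ V] [SeminormedAddCommGroup W] [NormedSpace ℝ W]
    (bV : Module.Basis ι ℝ V) (bW : Module.Basis κ ℝ W) (T : V →L[ℝ] W) {α : ℝ} {i : κ} {j : ι}
    (hα : α ≤ Metric.infDist (bW i) (Submodule.span ℝ (bW '' {l | l ≠ i}) : Set W))
    (hj : ‖bV j‖ ≤ 1) :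
    α * |LinearMap.toMatrix bV bW (T : V →ₗ[ℝ] W) i j| ≤ ‖T‖ := by
  rw [LinearMap.toMatrix_apply]
  calc α * |bW.repr (T (bV j)) i| ≤ ‖T (bV j)‖ := bW.mul_abs_repr_le_norm hα _
    _ ≤ ‖T‖ * ‖bV j‖ := T.le_opNorm _
    _ ≤ ‖T‖ := mul_le_of_le_one_right (norm_nonneg T) hj

theorem abs_det_in_bases_le_general
    {k : ℕ} {V W : Type*}
    [NormedAddCommGroup V] [NormedSpace ℝ V]
    [NormedAddCommGroup W] [NormedSpace ℝ W]
    (ηV : Module.Basis (Fin k) ℝ V) (ηW : Module.Basis (Fin k) ℝ W)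
    (hunitV : ∀ i, ‖ηV i‖ = 1)
    {α : ℝ} (hα : 0 < α)
    (hdW : ∀ i, α ≤ Metric.infDist (ηW i)
      ((Submodule.span ℝ ((⇑ηW) '' {j | j ≠ i}) : Submodule ℝ W) : Set W))
    (T : V →L[ℝ] W) :
    |(LinearMap.toMatrix ηV ηW (T : V →ₗ[ℝ] W)).det|
      ≤ (k : ℝ) ^ ((k : ℝ) / 2) * ‖T‖ ^ k * α⁻¹ ^ k := by
  have hentry : ∀ i j, |LinearMap.toMatrix ηV ηW (T : V →ₗ[ℝ] W) i j| ≤ ‖T‖ * α⁻¹ :=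
    fun i j => (le_mul_inv_iff₀ hα).2 <| by
      rw [mul_comm]
      exact T.mul_abs_toMatrix_le_opNorm ηV ηW (hdW i) (hunitV j).le
  rw [mul_assoc, ← mul_pow]
  exact Matrix.abs_det_le_of_forall_abs_le _ (by positivity) hentry

/-- If `η_V`, `η_W` are unit bases whose vectors keep distance at least `α` from
the span of the remaining basis vectors, then for every (continuous) linear map
`T : V → W` we have `|det_{η_V,η_W}(T)| ≤ k^{k/2} ‖T‖^k α^{-k}`. -/
theorem abs_det_in_bases_le
    {k : ℕ} {V W : Type*}
    [NormedAddCommGroup V] [NormedSpace ℝ V]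
    [NormedAddCommGroup W] [NormedSpace ℝ W]
    (ηV : Module.Basis (Fin k) ℝ V) (ηW : Module.Basis (Fin k) ℝ W)
    (hunitV : ∀ i, ‖ηV i‖ = 1) (hunitW : ∀ i, ‖ηW i‖ = 1)
    {α : ℝ} (hα : 0 < α)
    (hdV : ∀ i, α ≤ Metric.infDist (ηV i)
      ((Submodule.span ℝ ((⇑ηV) '' {j | j ≠ i}) : Submodule ℝ V) : Set V))
    (hdW : ∀ i, α ≤ Metric.infDist (ηW i)
      ((Submodule.span ℝ ((⇑ηW) '' {j | j ≠ i}) : Submodule ℝ W) : Set W))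
    (T : V →L[ℝ] W) :
    |(LinearMap.toMatrix ηV ηW (T : V →ₗ[ℝ] W)).det|
      ≤ (k : ℝ) ^ ((k : ℝ) / 2) * ‖T‖ ^ k * α⁻¹ ^ k :=
  abs_det_in_bases_le_general ηV ηW hunitV hα hdW T
end

section
/- Let A and B be k×k real matrices with all entries satisfying |A_{ij}| ≤ m and |B_{ij}| ≤ m, and with |A_{ij} − B_{ij}| ≤ δ for all i, j, where m ≥ 0 and δ ≥ 0. Then |det A − det B| ≤ k^{(k/2)+1} m^{k−1} δ. -/
/-!
Viewing the rows of a `k × k` matrix as vectors of `EuclideanSpace ℝ (Fin k)`, the determinant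
is a multilinear function of them, bounded by the product of their norms (Hadamard's
inequality). Telescoping through the matrices that take their first rows from `A` and the
remaining ones from `B` bounds `|det A - det B|` by `k R^(k-1) ε` when the rows have norm at most
`R` and differ by at most `ε`. Entrywise bounds `m` and `δ` give `R = √k m` and `ε = √k δ`.
-/

theorem OrthonormalBasis.abs_det_le_prod_norm {n : ℕ} {E : Type*}
    [NormedAddCommGroup E] [InnerProductSpace ℝ E] (a : OrthonormalBasis (Fin n) ℝ E)
    (v : Fin n → E) : |a.toBasis.det v| ≤ ∏ i, ‖v i‖ := by
  have : Fact (Module.finrank ℝ E = n) := ⟨by simpa using Module.finrank_eq_card_basis a.toBasis⟩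
  rw [← a.toBasis.orientation.volumeForm_robust' a]
  exact a.toBasis.orientation.abs_volumeForm_apply_le v

theorem OrthonormalBasis.abs_det_sub_det_le {n : ℕ} {E : Type*}
    [NormedAddCommGroup E] [InnerProductSpace ℝ E] (a : OrthonormalBasis (Fin n) ℝ E)
    {v w : Fin n → E} {R ε : ℝ} (hR : 0 ≤ R) (hε : 0 ≤ ε) (hv : ∀ i, ‖v i‖ ≤ R)
    (hw : ∀ i, ‖w i‖ ≤ R) (hvw : ∀ i, ‖v i - w i‖ ≤ ε) :
    |a.toBasis.det v - a.toBasis.det w| ≤ n * R ^ (n - 1) * ε := by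
  have telescope := a.toBasis.det.toMultilinearMap.norm_image_sub_le_of_bound zero_le_one
    (fun u => by rw [one_mul, Real.norm_eq_abs]; exact a.abs_det_le_prod_norm u) v w
  rw [Real.norm_eq_abs, one_mul, Fintype.card_fin] at telescope
  refine telescope.trans ?_
  gcongr
  · exact max_le ((pi_norm_le_iff_of_nonneg hR).2 hv) ((pi_norm_le_iff_of_nonneg hR).2 hw)
  · exact (pi_norm_le_iff_of_nonneg hε).2 hvw

namespace EuclideanSpace

theorem basisFun_det_toLp_rows {ι : Type*} [Fintype ι] [DecidableEq ι] (M : Matrix ι ι ℝ) :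
    (basisFun ι ℝ).toBasis.det (fun i => WithLp.toLp 2 (M i)) = M.det := by
  rw [Module.Basis.det_apply, ← Matrix.det_transpose]
  congr 1

theorem norm_le_sqrt_card_mul_s5 {𝕜 ι : Type*} [RCLike 𝕜] [Fintype ι] {x : EuclideanSpace 𝕜 ι}
    {C : ℝ} (hC : 0 ≤ C) (h : ∀ i, ‖x i‖ ≤ C) : ‖x‖ ≤ √(Fintype.card ι) * C := by
  rw [EuclideanSpace.norm_eq, ← Real.sqrt_sq hC, ← Real.sqrt_mul (Nat.cast_nonneg _)]
  gcongr
  calc ∑ i, ‖x i‖ ^ 2 ≤ ∑ _i : ι, C ^ 2 := by gcongr with i; exact h i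
    _ = Fintype.card ι * C ^ 2 := by simp

end EuclideanSpace

theorem Real.natCast_mul_sqrt_pow_sub_one_mul_sqrt (n : ℕ) :
    n * √n ^ (n - 1) * √n = (n : ℝ) ^ ((n : ℝ) / 2 + 1) := by
  rcases n.eq_zero_or_pos with rfl | hn
  · simp
  have hn' : (0 : ℝ) < n := by exact_mod_cast hn
  rw [mul_assoc, ← pow_succ, Nat.sub_add_cancel hn, Real.sqrt_eq_rpow, ← Real.rpow_natCast,
    ← Real.rpow_mul hn'.le, Real.rpow_add hn', Real.rpow_one]
  ring_nf

/-- If all entries of `A` and `B` are bounded by `m` and the entries of `A - B`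
are bounded by `δ`, then `|det A − det B| ≤ k^{k/2+1} m^{k−1} δ`. -/
theorem abs_det_sub_det_le
    {k : ℕ} (A B : Matrix (Fin k) (Fin k) ℝ) {m δ : ℝ}
    (hm : 0 ≤ m) (hδ : 0 ≤ δ)
    (hA : ∀ i j, |A i j| ≤ m) (hB : ∀ i j, |B i j| ≤ m)
    (hAB : ∀ i j, |A i j - B i j| ≤ δ) :
    |A.det - B.det| ≤ (k : ℝ) ^ ((k : ℝ) / 2 + 1) * m ^ (k - 1) * δ := by
  have row_norm_le {M : Matrix (Fin k) (Fin k) ℝ} {C : ℝ} (hC : 0 ≤ C) (hM : ∀ i j, |M i j| ≤ C)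
      (i : Fin k) : ‖WithLp.toLp 2 (M i)‖ ≤ √k * C := by
    simpa using EuclideanSpace.norm_le_sqrt_card_mul_s5 hC (x := WithLp.toLp 2 (M i))
      (by simpa using hM i)
  rw [← EuclideanSpace.basisFun_det_toLp_rows A, ← EuclideanSpace.basisFun_det_toLp_rows B]
  calc _ ≤ k * (√k * m) ^ (k - 1) * (√k * δ) :=
        (EuclideanSpace.basisFun (Fin k) ℝ).abs_det_sub_det_le (by positivity) (by positivity)
          (row_norm_le hm hA) (row_norm_le hm hB)
          (fun i => by rw [← WithLp.toLp_sub]; exact row_norm_le (M := A - B) hδ hAB i)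
    _ = (k : ℝ) ^ ((k : ℝ) / 2 + 1) * m ^ (k - 1) * δ := by
        rw [← Real.natCast_mul_sqrt_pow_sub_one_mul_sqrt]; ring
end

section
/- Let V and W be k-dimensional real normed spaces with unit bases η_V = {v_1,…,v_k} and η_W = {w_1,…,w_k} such that min{dist(v_i, span{v_j : j ≠ i}), dist(w_i, span{w_j : j ≠ i})} ≥ α for all i, where α > 0. Then for any two linear maps T1, T2 : V → W one has |det_{η_V,η_W}(T2) − det_{η_V,η_W}(T1)| ≤ k^{(k/2)+1} (max{‖T1‖, ‖T2‖})^{k−1} α^{-k} ‖T2 − T1‖; in particular, T ↦ det_{η_V,η_W}(T) is locally Lipschitz on the space of linear maps from V to W. -/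
/-!
Every entry of the matrix of `T` is a coordinate `ηW.repr (T (ηV j)) i`, and a vector at distance
`≥ α` from the span of the other basis vectors carries coordinate `c` only if its norm is
`≥ α |c|`; so the entries are bounded by `‖T‖ / α`. Viewing the determinant as the volume form
of the Euclidean columns, whose value is at most the product of the column norms (Hadamard), its
multilinearity bounds the change `|det B - det A|` by `k` times the `(k-1)`-th power of the larger
column norm times the column norm of `B - A`; each column norm is at most `√k` times the entry
bound. Local Lipschitz continuity follows by restricting to balls.
-/

instance EuclideanSpace.fact_finrank_fin (k : ℕ) :
    Fact (Module.finrank ℝ (EuclideanSpace ℝ (Fin k)) = k) :=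
  ⟨finrank_euclideanSpace_fin⟩

theorem Real.natCast_mul_sqrt_pow (k : ℕ) :
    (k : ℝ) * √k ^ k = (k : ℝ) ^ ((k : ℝ) / 2 + 1) := by
  rw [Real.rpow_add' k.cast_nonneg (by positivity), Real.rpow_one, Real.sqrt_eq_rpow,
    ← Real.rpow_mul_natCast k.cast_nonneg, mul_comm]
  ring_nf

namespace Matrix

variable {k : ℕ}

/-- The sup norm on `Fin k → _` makes `‖M.euclideanCols‖` the largest Euclidean column norm. -/
def euclideanCols (M : Matrix (Fin k) (Fin k) ℝ) : Fin k → EuclideanSpace ℝ (Fin k) :=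
  fun j => WithLp.toLp 2 (Mᵀ j)

theorem volumeForm_euclideanCols (M : Matrix (Fin k) (Fin k) ℝ) :
    (EuclideanSpace.basisFun (Fin k) ℝ).toBasis.orientation.volumeForm M.euclideanCols
      = M.det := by
  rw [Orientation.volumeForm_robust _ _ rfl, Module.Basis.det_apply]
  rfl

theorem euclideanCols_sub (A B : Matrix (Fin k) (Fin k) ℝ) :
    (B - A).euclideanCols = B.euclideanCols - A.euclideanCols := rfl

theorem abs_det_sub_le (A B : Matrix (Fin k) (Fin k) ℝ) :
    |B.det - A.det| ≤ k * max ‖B.euclideanCols‖ ‖A.euclideanCols‖ ^ (k - 1)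
      * ‖(B - A).euclideanCols‖ := by
  have := (EuclideanSpace.basisFun (Fin k) ℝ).toBasis.orientation.volumeForm
    |>.norm_image_sub_le_of_bound zero_le_one
      (fun m => by simpa using Orientation.abs_volumeForm_apply_le _ m)
      B.euclideanCols A.euclideanCols
  simpa [volumeForm_euclideanCols, euclideanCols_sub] using this

theorem norm_euclideanCols_le {M : Matrix (Fin k) (Fin k) ℝ} {c : ℝ} (hc : 0 ≤ c)
    (h : ∀ i j, |M i j| ≤ c) : ‖M.euclideanCols‖ ≤ √k * c := by
  refine (pi_norm_le_iff_of_nonneg (by positivity)).2 fun j => ?_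
  rw [EuclideanSpace.norm_eq, ← Real.sqrt_sq hc, ← Real.sqrt_mul k.cast_nonneg]
  gcongr
  calc ∑ i, ‖M.euclideanCols j i‖ ^ 2 ≤ ∑ _i : Fin k, c ^ 2 := by
        gcongr with i
        exact h i j
    _ = k * c ^ 2 := by simp

theorem abs_det_sub_le_of_abs_le {A B : Matrix (Fin k) (Fin k) ℝ} {c d : ℝ}
    (hc : 0 ≤ c) (hd : 0 ≤ d) (hA : ∀ i j, |A i j| ≤ c) (hB : ∀ i j, |B i j| ≤ c)
    (hBA : ∀ i j, |B i j - A i j| ≤ d) :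
    |B.det - A.det| ≤ (k : ℝ) ^ ((k : ℝ) / 2 + 1) * c ^ (k - 1) * d := by
  calc |B.det - A.det|
      ≤ k * max ‖B.euclideanCols‖ ‖A.euclideanCols‖ ^ (k - 1) * ‖(B - A).euclideanCols‖ :=
        abs_det_sub_le A B
    _ ≤ k * (√k * c) ^ (k - 1) * (√k * d) := by
        gcongr
        · exact max_le (norm_euclideanCols_le hc hB) (norm_euclideanCols_le hc hA)
        · exact norm_euclideanCols_le hd hBA
    _ = (k * √k ^ k) * c ^ (k - 1) * d := by
        cases k
        · simp
        · simp only [Nat.add_sub_cancel, mul_pow, pow_succ]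
          ring
    _ = (k : ℝ) ^ ((k : ℝ) / 2 + 1) * c ^ (k - 1) * d := by rw [Real.natCast_mul_sqrt_pow]

end Matrix

theorem Module.Basis.mul_abs_repr_le {ι E : Type*} [NormedAddCommGroup E] [NormedSpace ℝ E]
    (b : Module.Basis ι ℝ E) {α : ℝ} {i : ι}
    (hd : α ≤ Metric.infDist (b i) (Submodule.span ℝ (b '' {j | j ≠ i}) : Set E)) (w : E) :
    α * |b.repr w i| ≤ ‖w‖ := by
  set c := b.repr w i
  rcases eq_or_ne c 0 with hc | hc
  · simp [hc]
  set s := w - c • b i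
  have hs : s ∈ Submodule.span ℝ (b '' {j | j ≠ i}) := by
    refine b.mem_span_image.2 fun j hj => ?_
    rintro rfl
    simp [s, c] at hj
  have hw : w = c • (b i - -(c⁻¹ • s)) := by
    rw [sub_neg_eq_add, smul_add, smul_smul, mul_inv_cancel₀ hc, one_smul]
    simp [s]
  calc α * |c| ≤ Metric.infDist (b i) (Submodule.span ℝ (b '' {j | j ≠ i}) : Set E) * |c| := by
        gcongr
    _ ≤ ‖b i - -(c⁻¹ • s)‖ * |c| := by
        gcongr
        rw [← dist_eq_norm]
        exact Metric.infDist_le_dist_of_mem (neg_mem (Submodule.smul_mem _ _ hs))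
    _ = ‖w‖ := by rw [hw, _root_.norm_smul, Real.norm_eq_abs, mul_comm]

theorem LinearMap.abs_toMatrix_apply_le {ι κ V W : Type*} [Fintype ι] [Fintype κ]
    [DecidableEq ι] [NormedAddCommGroup V] [NormedSpace ℝ V] [NormedAddCommGroup W]
    [NormedSpace ℝ W] (ηV : Module.Basis ι ℝ V) (ηW : Module.Basis κ ℝ W)
    (hunitV : ∀ j, ‖ηV j‖ = 1) {α : ℝ} (hα : 0 < α)
    (hdW : ∀ i, α ≤ Metric.infDist (ηW i) (Submodule.span ℝ (ηW '' {j | j ≠ i}) : Set W))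
    (T : V →L[ℝ] W) (i : κ) (j : ι) :
    |LinearMap.toMatrix ηV ηW (T : V →ₗ[ℝ] W) i j| ≤ ‖T‖ * α⁻¹ := by
  rw [LinearMap.toMatrix_apply, le_mul_inv_iff₀ hα, mul_comm]
  calc α * |ηW.repr (T (ηV j)) i| ≤ ‖T (ηV j)‖ := ηW.mul_abs_repr_le (hdW i) _
    _ ≤ ‖T‖ := by simpa [hunitV j] using T.le_opNorm (ηV j)

theorem LocallyLipschitz.of_norm_sub_le_mul_max_norm_pow {E F : Type*}
    [SeminormedAddCommGroup E] [SeminormedAddCommGroup F] {f : E → F} {C : ℝ} (hC : 0 ≤ C)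
    (n : ℕ) (h : ∀ x y, ‖f y - f x‖ ≤ C * max ‖x‖ ‖y‖ ^ n * ‖y - x‖) : LocallyLipschitz f := by
  intro x₀
  refine ⟨⟨C * (‖x₀‖ + 1) ^ n, by positivity⟩, Metric.ball x₀ 1, Metric.ball_mem_nhds _ one_pos,
    LipschitzOnWith.of_dist_le_mul fun x hx y hy => ?_⟩
  have hnorm : ∀ z ∈ Metric.ball x₀ 1, ‖z‖ ≤ ‖x₀‖ + 1 := fun z hz => by
    have := norm_le_norm_add_norm_sub' z x₀
    rw [mem_ball_iff_norm] at hz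
    linarith
  rw [dist_eq_norm, dist_eq_norm]
  calc ‖f x - f y‖ ≤ C * max ‖y‖ ‖x‖ ^ n * ‖x - y‖ := h y x
    _ ≤ C * (‖x₀‖ + 1) ^ n * ‖x - y‖ := by gcongr; exact max_le (hnorm y hy) (hnorm x hx)

theorem LinearMap.abs_det_toMatrix_sub_le {k : ℕ} {V W : Type*}
    [NormedAddCommGroup V] [NormedSpace ℝ V] [NormedAddCommGroup W] [NormedSpace ℝ W]
    (ηV : Module.Basis (Fin k) ℝ V) (ηW : Module.Basis (Fin k) ℝ W)
    (hunitV : ∀ i, ‖ηV i‖ = 1) {α : ℝ} (hα : 0 < α)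
    (hdW : ∀ i, α ≤ Metric.infDist (ηW i) (Submodule.span ℝ (ηW '' {j | j ≠ i}) : Set W))
    (T1 T2 : V →L[ℝ] W) :
    |(LinearMap.toMatrix ηV ηW (T2 : V →ₗ[ℝ] W)).det
        - (LinearMap.toMatrix ηV ηW (T1 : V →ₗ[ℝ] W)).det|
      ≤ (k : ℝ) ^ ((k : ℝ) / 2 + 1) * (max ‖T1‖ ‖T2‖) ^ (k - 1) * α⁻¹ ^ k * ‖T2 - T1‖ := by
  have hentry := LinearMap.abs_toMatrix_apply_le ηV ηW hunitV hα hdW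
  have hentry_le : ∀ T : V →L[ℝ] W, ‖T‖ ≤ max ‖T1‖ ‖T2‖ → ∀ i j,
      |LinearMap.toMatrix ηV ηW (T : V →ₗ[ℝ] W) i j| ≤ max ‖T1‖ ‖T2‖ * α⁻¹ :=
    fun T hT i j => (hentry T i j).trans (by gcongr)
  calc _ ≤ (k : ℝ) ^ ((k : ℝ) / 2 + 1) * (max ‖T1‖ ‖T2‖ * α⁻¹) ^ (k - 1) * (‖T2 - T1‖ * α⁻¹) :=
        Matrix.abs_det_sub_le_of_abs_le (by positivity) (by positivity)
          (hentry_le T1 (le_max_left _ _)) (hentry_le T2 (le_max_right _ _))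
          fun i j => by simpa [map_sub] using hentry (T2 - T1) i j
    _ = _ := by
        cases k
        · simp
        · simp only [Nat.add_sub_cancel, mul_pow, pow_succ]
          ring

theorem abs_det_in_bases_sub_le_general
    {k : ℕ} {V W : Type*}
    [NormedAddCommGroup V] [NormedSpace ℝ V]
    [NormedAddCommGroup W] [NormedSpace ℝ W]
    (ηV : Module.Basis (Fin k) ℝ V) (ηW : Module.Basis (Fin k) ℝ W)
    (hunitV : ∀ i, ‖ηV i‖ = 1)
    {α : ℝ} (hα : 0 < α)
    (hdW : ∀ i, α ≤ Metric.infDist (ηW i)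
      ((Submodule.span ℝ ((⇑ηW) '' {j | j ≠ i}) : Submodule ℝ W) : Set W)) :
    (∀ T1 T2 : V →L[ℝ] W,
      |(LinearMap.toMatrix ηV ηW (T2 : V →ₗ[ℝ] W)).det
          - (LinearMap.toMatrix ηV ηW (T1 : V →ₗ[ℝ] W)).det|
        ≤ (k : ℝ) ^ ((k : ℝ) / 2 + 1) * (max ‖T1‖ ‖T2‖) ^ (k - 1) * α⁻¹ ^ k
            * ‖T2 - T1‖)
    ∧ LocallyLipschitz
        (fun T : V →L[ℝ] W => (LinearMap.toMatrix ηV ηW (T : V →ₗ[ℝ] W)).det) := by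
  have hbound := LinearMap.abs_det_toMatrix_sub_le ηV ηW hunitV hα hdW
  refine ⟨hbound, .of_norm_sub_le_mul_max_norm_pow (C := (k : ℝ) ^ ((k : ℝ) / 2 + 1) * α⁻¹ ^ k)
    (by positivity) (k - 1) fun T1 T2 => ?_⟩
  simpa [Real.norm_eq_abs, mul_right_comm] using hbound T1 T2

/-- Lipschitz estimate for the determinant in unit bases:
`|det_{η_V,η_W}(T2) − det_{η_V,η_W}(T1)| ≤ k^{k/2+1} max(‖T1‖,‖T2‖)^{k−1} α^{-k} ‖T2 − T1‖`;
in particular `T ↦ det_{η_V,η_W}(T)` is locally Lipschitz. -/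
theorem abs_det_in_bases_sub_le
    {k : ℕ} {V W : Type*}
    [NormedAddCommGroup V] [NormedSpace ℝ V]
    [NormedAddCommGroup W] [NormedSpace ℝ W]
    (ηV : Module.Basis (Fin k) ℝ V) (ηW : Module.Basis (Fin k) ℝ W)
    (hunitV : ∀ i, ‖ηV i‖ = 1) (hunitW : ∀ i, ‖ηW i‖ = 1)
    {α : ℝ} (hα : 0 < α)
    (hdV : ∀ i, α ≤ Metric.infDist (ηV i)
      ((Submodule.span ℝ ((⇑ηV) '' {j | j ≠ i}) : Submodule ℝ V) : Set V))
    (hdW : ∀ i, α ≤ Metric.infDist (ηW i)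
      ((Submodule.span ℝ ((⇑ηW) '' {j | j ≠ i}) : Submodule ℝ W) : Set W)) :
    (∀ T1 T2 : V →L[ℝ] W,
      |(LinearMap.toMatrix ηV ηW (T2 : V →ₗ[ℝ] W)).det
          - (LinearMap.toMatrix ηV ηW (T1 : V →ₗ[ℝ] W)).det|
        ≤ (k : ℝ) ^ ((k : ℝ) / 2 + 1) * (max ‖T1‖ ‖T2‖) ^ (k - 1) * α⁻¹ ^ k
            * ‖T2 - T1‖)
    ∧ LocallyLipschitz
        (fun T : V →L[ℝ] W => (LinearMap.toMatrix ηV ηW (T : V →ₗ[ℝ] W)).det) :=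
  abs_det_in_bases_sub_le_general ηV ηW hunitV hα hdW
end

section
/- Let V be a k-dimensional real normed space with a unit basis η_V = {v_1,…,v_k} satisfying dist(v_i, span{v_j : j ≠ i}) ≥ α for all i, where α > 0, let η_W = {u_1,…,u_k} be another unit basis of V, and let T : V → V be the linear map with T(v_i) = u_i for all i. Then for every Lebesgue measurable set A ⊆ V, μ_{η_V}(A) = |det_{η_V,η_V}(T)| · μ_{η_W}(A), and consequently μ_{η_V}(A) ≤ (1 + k^{(3k/2)+3} α^{-k-2} · sup_{1≤i≤k} ‖u_i − v_i‖) · μ_{η_W}(A). -/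
/-!
Writing `u = T ∘ v`, the coordinate map of `η_W` is `T` composed with that of `η_V`, so
`μ_{η_W}` is the push-forward of the Haar measure `μ_{η_V}` under `T` and the two measures differ
by the factor `|det T| = |det_{η_V}(u)|`. The distance hypothesis bounds every `η_V`-coordinate
of `x` by `‖x‖ / α`, so the alternating form `det_{η_V}` is bounded by `k! α⁻ᵏ ∏ ‖xᵢ‖`; the
Lipschitz estimate for bounded multilinear maps on unit vectors then gives
`|det_{η_V}(u) - det_{η_V}(v)| ≤ k · k! α⁻ᵏ · maxᵢ ‖uᵢ - vᵢ‖`, with `det_{η_V}(v) = 1`.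
-/

open MeasureTheory
open scoped Nat

theorem Matrix.abs_det_le_factorial_mul_prod {n : Type*} [Fintype n] [DecidableEq n]
    (A : Matrix n n ℝ) {c : n → ℝ} (hc : ∀ i j, |A i j| ≤ c j) :
    |A.det| ≤ (Fintype.card n)! * ∏ j, c j :=
  calc |A.det| = |∑ σ : Equiv.Perm n, Equiv.Perm.sign σ • ∏ j, A (σ j) j| := by
        rw [Matrix.det_apply]
    _ ≤ ∑ σ : Equiv.Perm n, |Equiv.Perm.sign σ • ∏ j, A (σ j) j| :=
        Finset.abs_sum_le_sum_abs _ _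
    _ = ∑ σ : Equiv.Perm n, ∏ j, |A (σ j) j| := by
        simp only [Units.smul_def, zsmul_eq_mul, abs_mul, abs_unit_intCast, one_mul,
          Finset.abs_prod]
    _ ≤ ∑ _σ : Equiv.Perm n, ∏ j, c j := by gcongr with σ _ j; exact hc _ _
    _ = (Fintype.card n)! * ∏ j, c j := by simp [Fintype.card_perm]

theorem abs_mul_infDist_le_norm_smul_add {V : Type*} [NormedAddCommGroup V] [NormedSpace ℝ V]
    (v : V) {S : Submodule ℝ V} {s : V} (hs : s ∈ S) (c : ℝ) :
    |c| * Metric.infDist v S ≤ ‖c • v + s‖ := by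
  rcases eq_or_ne c 0 with rfl | hc
  · simp
  · have hmem : -(c⁻¹ • s) ∈ (S : Set V) := S.neg_mem (S.smul_mem _ hs)
    calc |c| * Metric.infDist v S ≤ |c| * dist v (-(c⁻¹ • s)) := by
          gcongr; exact Metric.infDist_le_dist_of_mem hmem
      _ = ‖c • v + s‖ := by
          rw [dist_eq_norm, sub_neg_eq_add, ← Real.norm_eq_abs, ← norm_smul, smul_add,
            smul_smul, mul_inv_cancel₀ hc, one_smul]

theorem mul_factorial_div_pow_le {k : ℕ} (hk : 1 ≤ k) {α : ℝ} (hα : 0 < α) (hα1 : α ≤ 1) :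
    k * (k ! : ℝ) / α ^ k ≤ (k : ℝ) ^ (3 * (k : ℝ) / 2 + 3) * α ^ (-(k : ℝ) - 2) := by
  have hk1 : (1 : ℝ) ≤ k := by exact_mod_cast hk
  have hfact : k * (k ! : ℝ) ≤ (k : ℝ) ^ (3 * (k : ℝ) / 2 + 3) :=
    calc k * (k ! : ℝ) ≤ k * (k : ℝ) ^ k := by gcongr; exact_mod_cast Nat.factorial_le_pow k
      _ = (k : ℝ) ^ ((k + 1 : ℕ) : ℝ) := by rw [Real.rpow_natCast, pow_succ']
      _ ≤ _ := Real.rpow_le_rpow_of_exponent_le hk1 (by push_cast; linarith)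
  have hpow : (α ^ k)⁻¹ ≤ α ^ (-(k : ℝ) - 2) := by
    rw [← Real.rpow_natCast, ← Real.rpow_neg hα.le]
    exact Real.rpow_le_rpow_of_exponent_ge hα hα1 (by linarith)
  rw [div_eq_mul_inv]
  exact mul_le_mul hfact hpow (by positivity) (by positivity)

namespace Module.Basis

variable {ι V : Type*} [NormedAddCommGroup V] [NormedSpace ℝ V]

theorem mul_abs_repr_le_norm_s10 (b : Basis ι ℝ V) {α : ℝ} {j : ι}
    (hd : α ≤ Metric.infDist (b j) (Submodule.span ℝ (b '' {i | i ≠ j}))) (x : V) :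
    α * |b.repr x j| ≤ ‖x‖ := by
  set c := b.repr x j
  have hs : x - c • b j ∈ Submodule.span ℝ (b '' {i | i ≠ j}) := by
    rw [b.mem_span_image]
    rintro i hi rfl
    simp [c] at hi
  calc α * |c| ≤ |c| * Metric.infDist (b j) (Submodule.span ℝ (b '' {i | i ≠ j})) := by
        rw [mul_comm]; exact mul_le_mul_of_nonneg_left hd (abs_nonneg c)
    _ ≤ ‖c • b j + (x - c • b j)‖ := abs_mul_infDist_le_norm_smul_add _ hs c
    _ = ‖x‖ := by rw [add_sub_cancel]

variable [Fintype ι] [DecidableEq ι]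

theorem abs_det_le (b : Basis ι ℝ V) {α : ℝ} (hα : 0 < α)
    (hd : ∀ j, α ≤ Metric.infDist (b j) (Submodule.span ℝ (b '' {i | i ≠ j}))) (v : ι → V) :
    |b.det v| ≤ (Fintype.card ι)! / α ^ Fintype.card ι * ∏ j, ‖v j‖ :=
  calc |b.det v| ≤ (Fintype.card ι)! * ∏ j, ‖v j‖ / α :=
        Matrix.abs_det_le_factorial_mul_prod _ fun i j ↦
          (le_div_iff₀' hα).2 (b.mul_abs_repr_le_norm_s10 (hd i) (v j))
    _ = _ := by rw [Finset.prod_div_distrib, Finset.prod_const, Finset.card_univ]; ring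

theorem abs_det_sub_one_le (b : Basis ι ℝ V) {α : ℝ} (hα : 0 < α)
    (hd : ∀ j, α ≤ Metric.infDist (b j) (Submodule.span ℝ (b '' {i | i ≠ j})))
    (hb : ∀ i, ‖b i‖ ≤ 1) (v : ι → V) (hv : ∀ i, ‖v i‖ ≤ 1) :
    |b.det v - 1| ≤ Fintype.card ι * (Fintype.card ι)! / α ^ Fintype.card ι * ‖v - ⇑b‖ := by
  have hmax : max ‖v‖ ‖(⇑b : ι → V)‖ ^ (Fintype.card ι - 1) ≤ 1 :=
    pow_le_one₀ (by positivity) <| max_le ((pi_norm_le_iff_of_nonneg zero_le_one).2 hv)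
      ((pi_norm_le_iff_of_nonneg zero_le_one).2 hb)
  have hlip := b.det.toMultilinearMap.norm_image_sub_le_of_bound (by positivity)
    (b.abs_det_le hα hd) v b
  simp only [AlternatingMap.coe_multilinearMap, det_self, Real.norm_eq_abs] at hlip
  calc |b.det v - 1| ≤ _ := hlip
    _ ≤ (Fintype.card ι)! / α ^ Fintype.card ι * Fintype.card ι * 1 * ‖v - ⇑b‖ := by gcongr
    _ = _ := by ring

variable [MeasurableSpace V] [BorelSpace V]

theorem map_equivFun_symm_volume_eq_smul (b b' : Basis ι ℝ V) :
    Measure.map b.equivFun.symm volume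
      = ENNReal.ofReal |b.det b'| • Measure.map b'.equivFun.symm volume := by
  have : FiniteDimensional ℝ V := b.finiteDimensional_of_finite
  have : (Measure.map b.equivFun.symm volume).IsAddHaarMeasure :=
    Measure.MapLinearEquiv.isAddHaarMeasure _ _
  set f : V →ₗ[ℝ] V := (b.equiv b' (Equiv.refl ι) : V →ₗ[ℝ] V)
  have hdet : LinearMap.det f = b.det b' := by simp [f]
  have hf : Measure.map b'.equivFun.symm volume
      = Measure.map f (Measure.map b.equivFun.symm volume) := by
    have hb : Measurable b.equivFun.symm :=
      b.equivFun.symm.toContinuousLinearEquiv.continuous.measurable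
    rw [Measure.map_map f.continuous_of_finiteDimensional.measurable hb]
    congr 1
    ext x
    simp [f, Basis.equivFun_symm_apply, map_sum]
  have hne : b.det b' ≠ 0 := (b.isUnit_det b').ne_zero
  rw [hf, Measure.map_linearMap_addHaar_eq_smul_addHaar _ (hdet ▸ hne), smul_smul,
    ← ENNReal.ofReal_mul (abs_nonneg _), ← abs_mul, hdet, mul_inv_cancel₀ hne, abs_one,
    ENNReal.ofReal_one, one_smul]

end Module.Basis

/-- Change of basis for induced Lebesgue measures: if `η_V`, `η_W` are unit bases
of `V`, with the vectors of `η_V` at distance at least `α` from the span of the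
remaining ones, and `T` is the linear map sending `v_i` to `u_i = w_i`, then
`μ_{η_V}(A) = |det_{η_V,η_V}(T)| μ_{η_W}(A)`, and consequently
`μ_{η_V}(A) ≤ (1 + k^{3k/2+3} α^{−k−2} sup‖u_i − v_i‖) μ_{η_W}(A)`. -/
theorem measure_change_of_unit_basis
    {k : ℕ} (hk : 0 < k) {V : Type*}
    [NormedAddCommGroup V] [NormedSpace ℝ V]
    [MeasurableSpace V] [BorelSpace V]
    (ηV ηW : Module.Basis (Fin k) ℝ V)
    (hunitV : ∀ i, ‖ηV i‖ = 1) (hunitW : ∀ i, ‖ηW i‖ = 1)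
    {α : ℝ} (hα : 0 < α)
    (hd : ∀ i, α ≤ Metric.infDist (ηV i)
      ((Submodule.span ℝ ((⇑ηV) '' {j | j ≠ i}) : Submodule ℝ V) : Set V))
    (T : V →ₗ[ℝ] V) (hT : ∀ i, T (ηV i) = ηW i) :
    ∀ A : Set V, MeasurableSet A →
      Measure.map (⇑ηV.equivFun.symm) volume A
          = ENNReal.ofReal |(LinearMap.toMatrix ηV ηV T).det|
              * Measure.map (⇑ηW.equivFun.symm) volume A
      ∧ Measure.map (⇑ηV.equivFun.symm) volume A
          ≤ ENNReal.ofReal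
              (1 + (k : ℝ) ^ (3 * (k : ℝ) / 2 + 3) * α ^ (-(k : ℝ) - 2)
                * ⨆ i, ‖ηW i - ηV i‖)
              * Measure.map (⇑ηW.equivFun.symm) volume A := by
  intro A _
  have hdet : (LinearMap.toMatrix ηV ηV T).det = ηV.det ηW := by
    rw [LinearMap.det_toMatrix, ← mul_one (LinearMap.det T), ← ηV.det_self, ← ηV.det_comp]
    exact congrArg ηV.det (funext hT)
  have hα1 : α ≤ 1 := by
    simpa [hunitV] using ηV.mul_abs_repr_le_norm_s10 (hd ⟨0, hk⟩) (ηV ⟨0, hk⟩)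
  have hdist : ‖⇑ηW - ⇑ηV‖ ≤ ⨆ i, ‖ηW i - ηV i‖ :=
    (pi_norm_le_iff_of_nonneg (Real.iSup_nonneg fun _ ↦ norm_nonneg _)).2 fun i ↦
      le_ciSup (f := fun i ↦ ‖ηW i - ηV i‖) (Set.finite_range _).bddAbove i
  have hbound : |ηV.det ηW| ≤ 1 + (k : ℝ) ^ (3 * (k : ℝ) / 2 + 3) * α ^ (-(k : ℝ) - 2)
      * ⨆ i, ‖ηW i - ηV i‖ := by
    have hsub := ηV.abs_det_sub_one_le hα hd (fun i ↦ (hunitV i).le) ηW (fun i ↦ (hunitW i).le)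
    rw [Fintype.card_fin] at hsub
    have hconst := mul_le_mul (mul_factorial_div_pow_le hk hα hα1) hdist (norm_nonneg _)
      (by positivity)
    linarith [abs_sub_abs_le_abs_sub (ηV.det ηW) 1, abs_one (α := ℝ)]
  rw [hdet, ηV.map_equivFun_symm_volume_eq_smul ηW, Measure.smul_apply, smul_eq_mul]
  exact ⟨rfl, by gcongr⟩
end

section
/- Let X be a real normed space, ε ∈ (0,1), and let v_1,…,v_k ∈ X be vectors with ‖v_i‖ = 1 for all i such that dist(v_i, span{v_1,…,v_{i−1}}) > 1 − ε for all 2 ≤ i ≤ k. Then for every 1 ≤ i ≤ k, dist(v_i, span{v_j : j ≠ i}) ≥ ((1−ε)/(2−ε))^{k−1} (1−ε). -/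
/-!
Write `v i - w = ∑ j, a j • v j` with `a i = 1` and let `x m = ∑_{j < m} a j • v j`. Since
`x m` lies in `span {v j | j < m}`, which stays at distance `δ = 1 - ε` from `v m`, we get
`δ |a m| ≤ ‖x (m + 1)‖`, and hence `‖x m‖ ≤ ‖x (m + 1)‖ + |a m| ≤ (1 + δ) / δ * ‖x (m + 1)‖`.
Chaining the second estimate from `m = i + 1` up to `k` and using the first at `m = i` gives
`‖v i - w‖ ≥ (δ / (1 + δ)) ^ (k - 1 - i) * δ`, and `2 - ε = 1 + δ`.
-/

open Metric

theorem pow_sub_mul_le_of_mul_le_succ {f : ℕ → ℝ} {c : ℝ} {n : ℕ} (hc : 0 ≤ c)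
    (hf : ∀ m < n, c * f m ≤ f (m + 1)) {m : ℕ} (hm : m ≤ n) : c ^ (n - m) * f m ≤ f n := by
  induction n, hm using Nat.le_induction with
  | base => simp
  | succ n hmn ih =>
    calc c ^ (n + 1 - m) * f m = c * (c ^ (n - m) * f m) := by
          rw [Nat.sub_add_comm hmn, pow_succ]; ring
      _ ≤ c * f n := mul_le_mul_of_nonneg_left (ih fun l hl => hf l (by omega)) hc
      _ ≤ f (n + 1) := hf n (by omega)

theorem Fin.sum_filter_val_lt_succ {M : Type*} [AddCommMonoid M] {k m : ℕ} (f : Fin k → M)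
    (hm : m < k) :
    ∑ j : Fin k with j.val < m + 1, f j = f ⟨m, hm⟩ + ∑ j : Fin k with j.val < m, f j := by
  have hfilter : (Finset.univ.filter fun j : Fin k => j.val < m + 1) =
      insert ⟨m, hm⟩ (Finset.univ.filter fun j : Fin k => j.val < m) := by
    ext j
    simp only [Finset.mem_filter, Finset.mem_univ, Finset.mem_insert, true_and, Fin.ext_iff]
    omega
  rw [hfilter, Finset.sum_insert (by simp)]

theorem exists_sum_smul_eq_sub_of_mem_span_ne {ι R M : Type*} [Fintype ι] [DecidableEq ι]
    [Ring R] [AddCommGroup M] [Module R M] {v : ι → M} {i : ι} {w : M}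
    (hw : w ∈ Submodule.span R (v '' {j | j ≠ i})) :
    ∃ a : ι → R, a i = 1 ∧ ∑ j, a j • v j = v i - w := by
  obtain ⟨l, hl, rfl⟩ := (Finsupp.mem_span_image_iff_linearCombination R).1 hw
  have hli : l i = 0 := Finsupp.notMem_support_iff.1 fun h => hl h rfl
  refine ⟨Pi.single i 1 - ⇑l, by simp [hli], ?_⟩
  simp [sub_smul, Finset.sum_sub_distrib, Finsupp.linearCombination_apply, Finsupp.sum_fintype]

section

variable {X : Type*} [NormedAddCommGroup X] [NormedSpace ℝ X]

theorem mul_abs_le_norm_smul_add {U : Submodule ℝ X} {u s : X} {δ : ℝ}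
    (hu : δ ≤ infDist u U) (hs : s ∈ U) (t : ℝ) : δ * |t| ≤ ‖t • u + s‖ := by
  rcases eq_or_ne t 0 with rfl | ht
  · simp
  have hdist : infDist u U ≤ ‖u + t⁻¹ • s‖ := by
    simpa [dist_eq_norm] using infDist_le_dist_of_mem (x := u) (U.neg_mem (U.smul_mem t⁻¹ hs))
  calc δ * |t| ≤ |t| * ‖u + t⁻¹ • s‖ := by
        rw [mul_comm]; exact mul_le_mul_of_nonneg_left (hu.trans hdist) (abs_nonneg t)
    _ = ‖t • u + s‖ := by
        rw [← Real.norm_eq_abs, ← norm_smul, smul_add, smul_inv_smul₀ ht]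

theorem div_one_add_mul_norm_le_norm_smul_add {U : Submodule ℝ X} {u s : X} {δ : ℝ}
    (hδ : 0 < δ) (hu₁ : ‖u‖ ≤ 1) (hu : δ ≤ infDist u U) (hs : s ∈ U) (t : ℝ) :
    δ / (1 + δ) * ‖s‖ ≤ ‖t • u + s‖ := by
  have hcoeff := mul_abs_le_norm_smul_add hu hs t
  have hs_le : ‖s‖ ≤ ‖t • u + s‖ + |t| := by
    calc ‖s‖ = ‖t • u + s - t • u‖ := by rw [add_sub_cancel_left]
      _ ≤ ‖t • u + s‖ + ‖t • u‖ := norm_sub_le _ _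
      _ ≤ ‖t • u + s‖ + |t| := by
          rw [norm_smul, Real.norm_eq_abs]
          gcongr
          exact mul_le_of_le_one_right (abs_nonneg t) hu₁
  rw [div_mul_eq_mul_div, div_le_iff₀ (by positivity)]
  linarith [mul_le_mul_of_nonneg_left hs_le hδ.le]

theorem pow_mul_abs_le_norm_sum_smul {k : ℕ} {v : Fin k → X} {δ : ℝ} (hδ : 0 < δ)
    (hv₁ : ∀ j, ‖v j‖ ≤ 1)
    (hv : ∀ j, δ ≤ infDist (v j) (Submodule.span ℝ (v '' {l | (l : ℕ) < j})))
    (a : Fin k → ℝ) (i : Fin k) :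
    (δ / (1 + δ)) ^ (k - 1 - i) * δ * |a i| ≤ ‖∑ j, a j • v j‖ := by
  set f : ℕ → ℝ := fun m => ‖∑ j : Fin k with j.val < m, a j • v j‖
  have hmem (m : ℕ) :
      ∑ j : Fin k with j.val < m, a j • v j ∈ Submodule.span ℝ (v '' {l | l.val < m}) :=
    Submodule.sum_mem _ fun j hj =>
      Submodule.smul_mem _ _ (Submodule.subset_span ⟨j, (Finset.mem_filter.1 hj).2, rfl⟩)
  have hstep : ∀ m < k, δ / (1 + δ) * f m ≤ f (m + 1) := fun m hm => by
    simp only [f, Fin.sum_filter_val_lt_succ _ hm]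
    exact div_one_add_mul_norm_le_norm_smul_add hδ (hv₁ _) (hv ⟨m, hm⟩) (hmem m) _
  have hcoeff : δ * |a i| ≤ f (i + 1) := by
    simp only [f, Fin.sum_filter_val_lt_succ _ i.isLt]
    exact mul_abs_le_norm_smul_add (hv i) (hmem i) _
  have hchain := pow_sub_mul_le_of_mul_le_succ (m := i + 1) (by positivity) hstep i.isLt
  have htop : f k = ‖∑ j, a j • v j‖ := by simp [f]
  calc (δ / (1 + δ)) ^ (k - 1 - i) * δ * |a i|
      ≤ (δ / (1 + δ)) ^ (k - (i + 1)) * f (i + 1) := by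
        rw [mul_assoc, Nat.sub_sub, Nat.add_comm 1]; gcongr
    _ ≤ ‖∑ j, a j • v j‖ := htop ▸ hchain

end

/-- If `v_1,…,v_k` are unit vectors with `dist(v_i, span{v_1,…,v_{i−1}}) > 1 − ε`
for all `i`, then each `v_i` keeps distance at least `((1−ε)/(2−ε))^{k−1}(1−ε)`
from the span of all the other vectors. -/
theorem infDist_span_others_ge
    {X : Type*} [NormedAddCommGroup X] [NormedSpace ℝ X]
    {ε : ℝ} (hε : ε ∈ Set.Ioo (0 : ℝ) 1)
    {k : ℕ} (v : Fin k → X) (hunit : ∀ i, ‖v i‖ = 1)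
    (hd : ∀ i : Fin k, 1 - ε < Metric.infDist (v i)
      ((Submodule.span ℝ (v '' {j | (j : ℕ) < (i : ℕ)}) : Submodule ℝ X) : Set X)) :
    ∀ i : Fin k, ((1 - ε) / (2 - ε)) ^ (k - 1) * (1 - ε)
      ≤ Metric.infDist (v i)
          ((Submodule.span ℝ (v '' {j | j ≠ i}) : Submodule ℝ X) : Set X) := by
  intro i
  have hδ : 0 < 1 - ε := by linarith [hε.2]
  have hc : (1 - ε) / (2 - ε) = (1 - ε) / (1 + (1 - ε)) := by ring
  refine (le_infDist ⟨0, Submodule.zero_mem _⟩).2 fun w hw => ?_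
  obtain ⟨a, hai, hsum⟩ := exists_sum_smul_eq_sub_of_mem_span_ne hw
  have key := pow_mul_abs_le_norm_sum_smul hδ (fun j => (hunit j).le) (fun j => (hd j).le) a i
  rw [hai, abs_one, mul_one, hsum, ← dist_eq_norm, ← hc] at key
  refine le_trans ?_ key
  have hc₁ : (1 - ε) / (2 - ε) ≤ 1 := div_le_one_of_le₀ (by linarith) (by linarith)
  exact mul_le_mul_of_nonneg_right
    (pow_le_pow_of_le_one (div_nonneg hδ.le (by linarith)) hc₁ (by omega)) hδ.le
end

section
/- Let X be a compact metric space, f : X → X a continuous map, λ a Borel probability measure on X, and (L_k)_{k≥0} a sequence of Borel subsets of X with λ(L_k) → 0 as k → ∞. If for some strictly increasing sequence (n_i) of positive integers the measures (1/n_i) Σ_{k=0}^{n_i−1} (f^k)_*λ converge in the weak* topology to a Borel probability measure μ, then also (1/n_i) Σ_{k=0}^{n_i−1} (f^k)_*(λ|_{X∖L_k}) → μ in the weak* topology. -/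
/-!
Splitting `λ = λ|_{L_k} + λ|_{X∖L_k}` splits each averaged integral of `g` into the one in the
statement plus the Cesàro average of `d_k = ∫ g ∘ f^k dλ|_{L_k}`. Since `|d_k| ≤ ‖g‖ λ(L_k) → 0`,
the Cesàro averages of `d_k` tend to `0`, along any sequence `n_i → ∞`.
-/

open MeasureTheory Filter Topology Finset

open scoped ENNReal

namespace ContinuousMap

variable {X : Type*} [TopologicalSpace X] [CompactSpace X] [MeasurableSpace X]

theorem tendsto_integral_map_restrict_of_tendsto_measure_zero (g : C(X, ℝ))
    {Y : Type*} [MeasurableSpace Y] (ν : Measure Y) [IsFiniteMeasure ν] {φ : ℕ → Y → X}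
    (hφ : ∀ k, Measurable (φ k)) {s : ℕ → Set Y} (hs : Tendsto (fun k => ν (s k)) atTop (𝓝 0)) :
    Tendsto (fun k => ∫ x, g x ∂(ν.restrict (s k)).map (φ k)) atTop (𝓝 0) := by
  have hbound : ∀ k, ‖∫ x, g x ∂(ν.restrict (s k)).map (φ k)‖ ≤ ‖g‖ * ν.real (s k) := fun k => by
    have := norm_integral_le_of_norm_le_const (μ := (ν.restrict (s k)).map (φ k))
      (Eventually.of_forall g.norm_coe_le_norm)
    rwa [map_measureReal_apply (hφ k) .univ, Set.preimage_univ,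
      measureReal_restrict_apply_univ] at this
  have hreal : Tendsto (fun k => ν.real (s k)) atTop (𝓝 0) :=
    (ENNReal.tendsto_toReal ENNReal.zero_ne_top).comp hs
  exact squeeze_zero_norm hbound (by simpa using hreal.const_mul ‖g‖)

variable [OpensMeasurableSpace X]

theorem integrable_of_compactSpace (g : C(X, ℝ)) (μ : Measure X) [IsFiniteMeasure μ] :
    Integrable g μ :=
  g.continuous.integrable_of_hasCompactSupport (.of_compactSpace _)

theorem integral_inv_natCast_smul_sum_measure (g : C(X, ℝ)) (ν : ℕ → Measure X)
    [∀ k, IsFiniteMeasure (ν k)] (m : ℕ) :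
    ∫ x, g x ∂((m : ℝ≥0∞)⁻¹ • ∑ k ∈ range m, ν k) = (m : ℝ)⁻¹ * ∑ k ∈ range m, ∫ x, g x ∂ν k := by
  rw [integral_smul_measure,
    integral_finsetSum_measure fun k _ => g.integrable_of_compactSpace (ν k)]
  simp

theorem tendsto_integral_average_of_add (g : C(X, ℝ)) {ν ρ σ : ℕ → Measure X}
    [∀ k, IsFiniteMeasure (ρ k)] [∀ k, IsFiniteMeasure (σ k)] (hνρσ : ∀ k, ν k = ρ k + σ k)
    (hσ : Tendsto (fun k => ∫ x, g x ∂σ k) atTop (𝓝 0))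
    {ι : Type*} {l : Filter ι} {n : ι → ℕ} (hn : Tendsto n l atTop) {c : ℝ}
    (hν : Tendsto (fun i => ∫ x, g x ∂((n i : ℝ≥0∞)⁻¹ • ∑ k ∈ range (n i), ν k)) l (𝓝 c)) :
    Tendsto (fun i => ∫ x, g x ∂((n i : ℝ≥0∞)⁻¹ • ∑ k ∈ range (n i), ρ k)) l (𝓝 c) := by
  have (k : ℕ) : IsFiniteMeasure (ν k) := hνρσ k ▸ inferInstance
  have hsplit : ∀ m : ℕ, ∫ x, g x ∂((m : ℝ≥0∞)⁻¹ • ∑ k ∈ range m, ρ k) =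
      ∫ x, g x ∂((m : ℝ≥0∞)⁻¹ • ∑ k ∈ range m, ν k) - (m : ℝ)⁻¹ * ∑ k ∈ range m, ∫ x, g x ∂σ k :=
    fun m => by
      rw [g.integral_inv_natCast_smul_sum_measure, g.integral_inv_natCast_smul_sum_measure]
      simp only [hνρσ, integral_add_measure (g.integrable_of_compactSpace _)
        (g.integrable_of_compactSpace _), sum_add_distrib]
      ring
  simpa [hsplit] using hν.sub (hσ.cesaro.comp hn)

end ContinuousMap

theorem weakstar_limit_of_averages_restricted_general
    {X : Type*} [MetricSpace X] [CompactSpace X]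
    [MeasurableSpace X] [BorelSpace X]
    (f : X → X) (hf : Continuous f)
    (lam μ : Measure X)
    (hlam : IsProbabilityMeasure lam)
    (L : ℕ → Set X) (hL : ∀ k, MeasurableSet (L k))
    (hL0 : Tendsto (fun k => lam (L k)) atTop (𝓝 0))
    (n : ℕ → ℕ) (hmono : StrictMono n)
    (hconv : ∀ g : C(X, ℝ),
      Tendsto
        (fun i => ∫ x, g x ∂(((n i : ℝ≥0∞))⁻¹ •
          ∑ k ∈ Finset.range (n i), Measure.map (f^[k]) lam))
        atTop (𝓝 (∫ x, g x ∂μ))) :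
    ∀ g : C(X, ℝ),
      Tendsto
        (fun i => ∫ x, g x ∂(((n i : ℝ≥0∞))⁻¹ •
          ∑ k ∈ Finset.range (n i),
            Measure.map (f^[k]) (lam.restrict (L k)ᶜ)))
        atTop (𝓝 (∫ x, g x ∂μ)) := by
  intro g
  have hfk : ∀ k, Measurable f^[k] := fun k => (hf.iterate k).measurable
  have hsplit : ∀ k, lam.map f^[k] =
      (lam.restrict (L k)ᶜ).map f^[k] + (lam.restrict (L k)).map f^[k] := fun k => by
    rw [← Measure.map_add _ _ (hfk k), add_comm, Measure.restrict_add_restrict_compl (hL k)]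
  exact g.tendsto_integral_average_of_add hsplit
    (g.tendsto_integral_map_restrict_of_tendsto_measure_zero lam hfk hL0)
    hmono.tendsto_atTop (hconv g)

/-- If `λ(L_k) → 0`, then discarding the sets `L_k` does not change the weak*
limit of the averaged pushforward measures `(1/n_i) Σ_{k<n_i} (f^k)_*λ`. -/
theorem weakstar_limit_of_averages_restricted
    {X : Type*} [MetricSpace X] [CompactSpace X]
    [MeasurableSpace X] [BorelSpace X]
    (f : X → X) (hf : Continuous f)
    (lam μ : Measure X)
    (hlam : IsProbabilityMeasure lam) (hμ : IsProbabilityMeasure μ)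
    (L : ℕ → Set X) (hL : ∀ k, MeasurableSet (L k))
    (hL0 : Tendsto (fun k => lam (L k)) atTop (𝓝 0))
    (n : ℕ → ℕ) (hmono : StrictMono n) (hpos : ∀ i, 0 < n i)
    (hconv : ∀ g : C(X, ℝ),
      Tendsto
        (fun i => ∫ x, g x ∂(((n i : ℝ≥0∞))⁻¹ •
          ∑ k ∈ Finset.range (n i), Measure.map (f^[k]) lam))
        atTop (𝓝 (∫ x, g x ∂μ))) :
    ∀ g : C(X, ℝ),
      Tendsto
        (fun i => ∫ x, g x ∂(((n i : ℝ≥0∞))⁻¹ •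
          ∑ k ∈ Finset.range (n i),
            Measure.map (f^[k]) (lam.restrict (L k)ᶜ)))
        atTop (𝓝 (∫ x, g x ∂μ)) :=
  weakstar_limit_of_averages_restricted_general f hf lam μ hlam L hL hL0 n hmono hconv
end
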